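/- Let (Ā, B̄) be an interconnected structural system with r subsystems such that each subsystem state digraph D(Ā_i) is strongly connected. If a state vertex of the overall system digraph D(Ā, B̄) is reachable by a directed path from some input vertex, then it is reachable by a directed path that contains at most r interconnection edges, i.e., at most r edges (x_l, x_k) with x_l a state vertex of subsystem j, x_k a state vertex of subsystem i and i ≠ j. -/

import Mathlib

open Matrix

/-- Controllability matrix `[B, AB, …, A^{n-1}B]` (columns indexed by `Fin (card X) × U`). -/
def ctrbMatrix {X U : Type*} [Fintype X] [DecidableEq X]
    (A : Matrix X X ℝ) (B : Matrix X U ℝ) :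
    Matrix X (Fin (Fintype.card X) × U) ℝ :=
  fun i kj => (A ^ (kj.1 : ℕ) * B) i kj.2

/-- A real pair `(A,B)` is controllable if its controllability matrix has full rank. -/
def Controllable {X U : Type*} [Fintype X] [DecidableEq X] [Fintype U]
    (A : Matrix X X ℝ) (B : Matrix X U ℝ) : Prop :=
  (ctrbMatrix A B).rank = Fintype.card X

/-- `M` has the same sparsity pattern as the Boolean matrix `Mb`. -/
def SameSparsity {X Y : Type*} (M : Matrix X Y ℝ) (Mb : Matrix X Y Bool) : Prop :=
  ∀ i j, M i j = 0 ↔ Mb i j = false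

/-- Structural controllability of a structural (Boolean) pair. -/
def StructurallyControllable {X U : Type*} [Fintype X] [DecidableEq X] [Fintype U]
    (Ab : Matrix X X Bool) (Bb : Matrix X U Bool) : Prop :=
  ∃ A : Matrix X X ℝ, ∃ B : Matrix X U ℝ,
    SameSparsity A Ab ∧ SameSparsity B Bb ∧ Controllable A B

/-- Edge relation of the system digraph `D(Ā,B̄)`. -/
def sysDigraphRel {X U : Type*} (Ab : Matrix X X Bool) (Bb : Matrix X U Bool) :
    (X ⊕ U) → (X ⊕ U) → Prop :=
  fun v w => match v, w with
  | Sum.inl j, Sum.inl i => Ab i j = true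
  | Sum.inr k, Sum.inl i => Bb i k = true
  | _, Sum.inr _ => False

/-- A state vertex is input-reachable if some input vertex has a directed path to it. -/
def InputReachable {X U : Type*} (Ab : Matrix X X Bool) (Bb : Matrix X U Bool) (x : X) : Prop :=
  ∃ u : U, Relation.ReflTransGen (sysDigraphRel Ab Bb) (Sum.inr u) (Sum.inl x)

/-- Edge relation of the system bipartite graph `B(Ā,B̄)` (left = states ⊕ inputs, right = states). -/
def sysBipEdge {X U : Type*} (Ab : Matrix X X Bool) (Bb : Matrix X U Bool) :
    (X ⊕ U) → X → Prop :=
  fun v i => match v with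
  | Sum.inl j => Ab i j = true
  | Sum.inr k => Bb i k = true

/-- Edge relation of the state bipartite graph `B(Ā)`. -/
def stateBipEdge {X : Type*} (Ab : Matrix X X Bool) : X → X → Prop :=
  fun j i => Ab i j = true

/-- A matching of a bipartite graph with edge relation `E`: a set of edges sharing no
left vertex and no right vertex. -/
def IsMatching {α β : Type*} (E : α → β → Prop) (M : Set (α × β)) : Prop :=
  (∀ e ∈ M, E e.1 e.2) ∧
  (∀ e ∈ M, ∀ f ∈ M, e.1 = f.1 → e = f) ∧
  (∀ e ∈ M, ∀ f ∈ M, e.2 = f.2 → e = f)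

/-- Right vertices belonging to no edge of `M`. -/
def rightUnmatched {α β : Type*} (M : Set (α × β)) : Set β :=
  {b | ∀ e ∈ M, e.2 ≠ b}

/-- Left vertices belonging to no edge of `M`. -/
def leftUnmatched {α β : Type*} (M : Set (α × β)) : Set α :=
  {a | ∀ e ∈ M, e.1 ≠ a}

/-- A maximum matching: a matching of the largest cardinality. -/
def IsMaxMatching {α β : Type*} (E : α → β → Prop) (M : Set (α × β)) : Prop :=
  IsMatching E M ∧ ∀ M' : Set (α × β), IsMatching E M' → M'.ncard ≤ M.ncard

/-- `S` is a strongly connected component of the digraph with edge relation `R`. -/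
def IsSCC {V : Type*} (R : V → V → Prop) (S : Set V) : Prop :=
  S.Nonempty ∧ (∀ u ∈ S, ∀ v ∈ S, Relation.ReflTransGen R u v) ∧
  ∀ w : V, (∀ u ∈ S, Relation.ReflTransGen R u w ∧ Relation.ReflTransGen R w u) → w ∈ S

/-- An SCC is non-top linked if it has no incoming edge from outside. -/
def NonTopLinked {V : Type*} (R : V → V → Prop) (S : Set V) : Prop :=
  ∀ u v : V, R u v → v ∈ S → u ∈ S

/-- Dynamics pattern `(I_r ⊗ Ā') ∨ (Ē ⊗ H̄)` of a system of `r` similar subsystems. -/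
def simA {n : ℕ} (r : ℕ) (A' H : Matrix (Fin n) (Fin n) Bool)
    (E : Matrix (Fin r) (Fin r) Bool) :
    Matrix (Fin r × Fin n) (Fin r × Fin n) Bool :=
  fun q q' => ((if q.1 = q'.1 then A' q.2 q'.2 else false) || (E q.1 q'.1 && H q.2 q'.2))

/-- Input pattern `I_r ⊗ B̄'` of a system of `r` similar subsystems. -/
def simB {n p : ℕ} (r : ℕ) (B' : Matrix (Fin n) (Fin p) Bool) :
    Matrix (Fin r × Fin n) (Fin r × Fin p) Bool :=
  fun q k => if q.1 = k.1 then B' q.2 k.2 else false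

/-- Entrywise OR of Boolean matrices. -/
def orMat {X Y : Type*} (M N : Matrix X Y Bool) : Matrix X Y Bool :=
  fun i j => M i j || N i j

/-- Dynamics pattern of an interconnected system: diagonal blocks `Ā_i`,
off-diagonal blocks `Ē_{i,j}`. -/
def interA {r : ℕ} {n : Fin r → ℕ}
    (A : ∀ i, Matrix (Fin (n i)) (Fin (n i)) Bool)
    (E : ∀ i j, Matrix (Fin (n i)) (Fin (n j)) Bool) :
    Matrix (Σ i, Fin (n i)) (Σ i, Fin (n i)) Bool :=
  fun q q' => if h : q'.1 = q.1 then A q.1 q.2 (h ▸ q'.2) else E q.1 q'.1 q.2 q'.2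

/-- Input pattern of an interconnected system: block diagonal with blocks `B̄_i`. -/
def interB {r : ℕ} {n p : Fin r → ℕ}
    (B : ∀ i, Matrix (Fin (n i)) (Fin (p i)) Bool) :
    Matrix (Σ i, Fin (n i)) (Σ i, Fin (p i)) Bool :=
  fun q k => if h : k.1 = q.1 then B q.1 q.2 (h ▸ k.2) else false

/-- Whether a step between two vertices of the overall system digraph is an
interconnection edge, i.e. goes between state vertices of two distinct subsystems. -/
def isInterEdge {r : ℕ} {n p : Fin r → ℕ} :
    ((Σ i, Fin (n i)) ⊕ (Σ i, Fin (p i))) → ((Σ i, Fin (n i)) ⊕ (Σ i, Fin (p i))) → Bool :=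
  fun v w => match v, w with
  | Sum.inl a, Sum.inl b => decide (a.1 ≠ b.1)
  | _, _ => false

/-- Number of interconnection edges along a walk given by its list of vertices. -/
def interEdgeCount {r : ℕ} {n p : Fin r → ℕ}
    (l : List ((Σ i, Fin (n i)) ⊕ (Σ i, Fin (p i)))) : ℕ :=
  (l.zip l.tail).countP (fun e => isInterEdge e.1 e.2)

/-! Let `S m` be the set of subsystems containing a state that some input reaches along a walk
with at most `m` interconnection edges. These sets increase with `m`, and since every subsystem
is strongly connected, `S m` already determines every state reachable at level `m`. So as soon
as `S (m + 1) = S m`, no further interconnection edge is ever needed; as `S 0 ≠ ∅` and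
`S m ⊆ Fin r`, this happens at some `m < r`. -/

theorem Finset.exists_lt_card_succ_subset_of_monotone {α : Type*} [Fintype α]
    {S : ℕ → Finset α} (hS : Monotone S) (h0 : (S 0).Nonempty) :
    ∃ m < Fintype.card α, S (m + 1) ⊆ S m := by
  by_contra! hstrict
  have hcard : ∀ m ≤ Fintype.card α, m < (S m).card := by
    intro m hm
    induction m with
    | zero => exact Finset.card_pos.2 h0
    | succ m ih =>
      have hlt : (S m).card < (S (m + 1)).card :=
        Finset.card_lt_card ⟨hS m.le_succ, hstrict m (Nat.lt_of_succ_le hm)⟩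
      have := ih (Nat.le_of_succ_le hm)
      omega
  exact absurd (Finset.card_le_univ _) (hcard _ le_rfl).not_ge

section InterconnectedSystem

variable {r : ℕ} {n p : Fin r → ℕ}

theorem interA_mk_same (A : ∀ i, Matrix (Fin (n i)) (Fin (n i)) Bool)
    (E : ∀ i j, Matrix (Fin (n i)) (Fin (n j)) Bool) (i : Fin r) (a b : Fin (n i)) :
    interA A E ⟨i, b⟩ ⟨i, a⟩ = A i b a := by
  simp [interA]

theorem interA_mk_of_ne (A : ∀ i, Matrix (Fin (n i)) (Fin (n i)) Bool)
    (E : ∀ i j, Matrix (Fin (n i)) (Fin (n j)) Bool) {i j : Fin r} (hji : j ≠ i)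
    (a : Fin (n j)) (b : Fin (n i)) :
    interA A E ⟨i, b⟩ ⟨j, a⟩ = E i j b a := by
  simp [interA, hji]

theorem interB_mk_same (B : ∀ i, Matrix (Fin (n i)) (Fin (p i)) Bool) (i : Fin r)
    (a : Fin (n i)) (k : Fin (p i)) :
    interB B ⟨i, a⟩ ⟨i, k⟩ = B i a k := by
  simp [interB]

theorem interB_mk_of_ne (B : ∀ i, Matrix (Fin (n i)) (Fin (p i)) Bool) {i j : Fin r}
    (hji : j ≠ i) (a : Fin (n i)) (k : Fin (p j)) :
    interB B ⟨i, a⟩ ⟨j, k⟩ = false := by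
  simp [interB, hji]

theorem interEdgeCount_cons_cons (a b : (Σ i, Fin (n i)) ⊕ (Σ i, Fin (p i)))
    (l : List ((Σ i, Fin (n i)) ⊕ (Σ i, Fin (p i)))) :
    interEdgeCount (a :: b :: l) = interEdgeCount (b :: l) + (isInterEdge a b).toNat := by
  cases h : isInterEdge a b <;> simp [interEdgeCount, h]

theorem interEdgeCount_cons_append_singleton (a w : (Σ i, Fin (n i)) ⊕ (Σ i, Fin (p i)))
    (l : List ((Σ i, Fin (n i)) ⊕ (Σ i, Fin (p i)))) :
    interEdgeCount (a :: (l ++ [w])) =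
      interEdgeCount (a :: l) +
        (isInterEdge ((a :: l).getLast (List.cons_ne_nil _ _)) w).toNat := by
  induction l generalizing a with
  | nil =>
    rw [List.nil_append, interEdgeCount_cons_cons]
    simp [interEdgeCount]
  | cons b l ih =>
    rw [List.cons_append, interEdgeCount_cons_cons, ih, interEdgeCount_cons_cons,
      List.getLast_cons (List.cons_ne_nil _ _)]
    omega

variable {A : ∀ i, Matrix (Fin (n i)) (Fin (n i)) Bool}
  {B : ∀ i, Matrix (Fin (n i)) (Fin (p i)) Bool}
  {E : ∀ i j, Matrix (Fin (n i)) (Fin (n j)) Bool}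

variable (A B E) in
/-- `ReachableWithin A B E x m`: some input reaches `x` along a walk with at most `m`
interconnection edges. -/
inductive ReachableWithin : (Σ i, Fin (n i)) → ℕ → Prop
  | input {i : Fin r} (a : Fin (n i)) (k : Fin (p i)) (m : ℕ) :
      B i a k = true → ReachableWithin ⟨i, a⟩ m
  | intra {i : Fin r} {a : Fin (n i)} {m : ℕ} (b : Fin (n i)) :
      ReachableWithin ⟨i, a⟩ m → A i b a = true → ReachableWithin ⟨i, b⟩ m
  | inter {i j : Fin r} {a : Fin (n j)} {m : ℕ} (b : Fin (n i)) :
      ReachableWithin ⟨j, a⟩ m → j ≠ i → E i j b a = true →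
        ReachableWithin ⟨i, b⟩ (m + 1)

namespace ReachableWithin

theorem mono {x : Σ i, Fin (n i)} {m m' : ℕ} (h : ReachableWithin A B E x m) (hm : m ≤ m') :
    ReachableWithin A B E x m' := by
  induction h generalizing m' with
  | input a k m hB => exact input a k m' hB
  | intra b _ hA ih => exact intra b (ih hm) hA
  | inter b _ hji hE ih =>
    cases m' with
    | zero => omega
    | succ m' => exact inter b (ih (by omega)) hji hE

theorem of_interA {y y' : Σ i, Fin (n i)} {m : ℕ} (h : ReachableWithin A B E y m)
    (he : interA A E y' y = true) : ReachableWithin A B E y' (m + 1) := by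
  obtain ⟨j, a⟩ := y
  obtain ⟨i, b⟩ := y'
  by_cases hji : j = i
  · subst hji
    rw [interA_mk_same] at he
    exact intra b (h.mono m.le_succ) he
  · rw [interA_mk_of_ne A E hji] at he
    exact inter b h hji he

theorem of_reflTransGen_intra {i : Fin r} {a b : Fin (n i)} {m : ℕ}
    (h : ReachableWithin A B E ⟨i, a⟩ m)
    (hab : Relation.ReflTransGen (fun a b => A i b a = true) a b) :
    ReachableWithin A B E ⟨i, b⟩ m := by
  induction hab with
  | refl => exact h
  | tail _ hA ih => exact intra _ ih hA

theorem exists_level_zero {x : Σ i, Fin (n i)} {m : ℕ} (h : ReachableWithin A B E x m) :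
    ∃ y, ReachableWithin A B E y 0 := by
  induction h with
  | input a k _ hB => exact ⟨_, input a k 0 hB⟩
  | intra _ _ _ ih => exact ih
  | inter _ _ _ _ ih => exact ih

theorem of_stable_level {m : ℕ}
    (hstable : ∀ z, ReachableWithin A B E z (m + 1) → ReachableWithin A B E z m)
    {x : Σ i, Fin (n i)} {c : ℕ} (h : ReachableWithin A B E x c) :
    ReachableWithin A B E x m := by
  induction h with
  | input a k _ hB => exact input a k m hB
  | intra b _ hA ih => exact intra b ih hA
  | inter b _ hji hE ih => exact hstable _ (inter b ih hji hE)

theorem exists_stable_level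
    (hstrong : ∀ i : Fin r, ∀ a b : Fin (n i),
      Relation.ReflTransGen (fun a b => A i b a = true) a b)
    {x : Σ i, Fin (n i)} {c : ℕ} (hx : ReachableWithin A B E x c) :
    ∃ m < r, ∀ z, ReachableWithin A B E z (m + 1) → ReachableWithin A B E z m := by
  classical
  let S : ℕ → Finset (Fin r) := fun m =>
    Finset.univ.filter fun i => ∃ a, ReachableWithin A B E ⟨i, a⟩ m
  have hmem : ∀ m i, i ∈ S m ↔ ∃ a, ReachableWithin A B E ⟨i, a⟩ m := by simp [S]
  have hS : Monotone S := fun m m' hm i hi => by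
    obtain ⟨a, ha⟩ := (hmem m i).1 hi
    exact (hmem m' i).2 ⟨a, ha.mono hm⟩
  obtain ⟨⟨i₀, a₀⟩, h₀⟩ := hx.exists_level_zero
  obtain ⟨m, hmr, hsub⟩ :=
    Finset.exists_lt_card_succ_subset_of_monotone hS ⟨i₀, (hmem 0 i₀).2 ⟨a₀, h₀⟩⟩
  refine ⟨m, by simpa using hmr, fun ⟨i, b⟩ hb => ?_⟩
  obtain ⟨a, ha⟩ := (hmem m i).1 (hsub ((hmem (m + 1) i).2 ⟨b, hb⟩))
  exact ha.of_reflTransGen_intra (hstrong i a b)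

theorem exists_walk {y : Σ i, Fin (n i)} {m : ℕ} (h : ReachableWithin A B E y m) :
    ∃ u : Σ i, Fin (p i),
      ∃ l : List ((Σ i, Fin (n i)) ⊕ (Σ i, Fin (p i))),
        (Sum.inr u :: l).IsChain (sysDigraphRel (interA A E) (interB B)) ∧
        (Sum.inr u :: l).getLast (List.cons_ne_nil _ _) = Sum.inl y ∧
        interEdgeCount (Sum.inr u :: l) ≤ m := by
  induction h with
  | @input i a k _ hB =>
    refine ⟨⟨i, k⟩, [Sum.inl ⟨i, a⟩], ?_, rfl, ?_⟩
    · exact List.isChain_pair.2 ((interB_mk_same B i a k).trans hB)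
    · simp [isInterEdge, interEdgeCount]
  | @intra i a _ b _ hA ih =>
    obtain ⟨u, l, hchain, hlast, hcount⟩ := ih
    refine ⟨u, l ++ [Sum.inl ⟨i, b⟩], ?_, by simp, ?_⟩
    · refine hchain.append (List.isChain_singleton _) ?_
      simpa [List.getLast?_eq_some_getLast, hlast, sysDigraphRel, interA_mk_same] using hA
    · simpa [interEdgeCount_cons_append_singleton, hlast, isInterEdge] using hcount
  | @inter i j a _ b _ hji hE ih =>
    obtain ⟨u, l, hchain, hlast, hcount⟩ := ih
    refine ⟨u, l ++ [Sum.inl ⟨i, b⟩], ?_, by simp, ?_⟩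
    · refine hchain.append (List.isChain_singleton _) ?_
      simpa [List.getLast?_eq_some_getLast, hlast, sysDigraphRel, interA_mk_of_ne A E hji]
        using hE
    · simpa [interEdgeCount_cons_append_singleton, hlast, isInterEdge, hji] using hcount

end ReachableWithin

theorem exists_reachableWithin_of_reflTransGen {u : Σ i, Fin (p i)}
    {v : (Σ i, Fin (n i)) ⊕ (Σ i, Fin (p i))}
    (h : Relation.ReflTransGen (sysDigraphRel (interA A E) (interB B)) (Sum.inr u) v) :
    ∀ y, v = Sum.inl y → ∃ c, ReachableWithin A B E y c := by
  induction h with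
  | refl => simp
  | @tail w v _ hwv ih =>
    rintro ⟨i, a⟩ rfl
    match w, hwv with
    | Sum.inl y, hA =>
      obtain ⟨c, hc⟩ := ih y rfl
      exact ⟨c + 1, hc.of_interA hA⟩
    | Sum.inr ⟨j, k⟩, hB =>
      by_cases hji : j = i
      · subst hji
        exact ⟨0, .input a k 0 ((interB_mk_same B j a k).symm.trans hB)⟩
      · exact absurd hB (by simp [sysDigraphRel, interB_mk_of_ne B hji])

end InterconnectedSystem

/-- in an interconnected system whose subsystem state digraphs are all
strongly connected, every input-reachable state vertex is reachable by a directed path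
containing at most `r` interconnection edges. -/
theorem inputReachable_with_few_interconnection_edges
    {r : ℕ} {n p : Fin r → ℕ}
    (A : ∀ i, Matrix (Fin (n i)) (Fin (n i)) Bool)
    (B : ∀ i, Matrix (Fin (n i)) (Fin (p i)) Bool)
    (E : ∀ i j, Matrix (Fin (n i)) (Fin (n j)) Bool)
    (hstrong : ∀ i : Fin r, ∀ a b : Fin (n i),
      Relation.ReflTransGen (fun a b => A i b a = true) a b)
    (x : Σ i, Fin (n i))
    (hreach : InputReachable (interA A E) (interB B) x) :
    ∃ u : Σ i, Fin (p i),
      ∃ l : List ((Σ i, Fin (n i)) ⊕ (Σ i, Fin (p i))),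
        List.Chain (sysDigraphRel (interA A E) (interB B)) (Sum.inr u) l ∧
        (Sum.inr u :: l).getLast (List.cons_ne_nil _ _) = Sum.inl x ∧
        interEdgeCount (Sum.inr u :: l) ≤ r := by
  obtain ⟨u, hu⟩ := hreach
  obtain ⟨c, hc⟩ := exists_reachableWithin_of_reflTransGen hu x rfl
  obtain ⟨m, hmr, hstable⟩ := hc.exists_stable_level hstrong
  exact ((hc.of_stable_level hstable).mono hmr.le).exists_walk
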